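/- Let (x,y) ∈ S. Then (x,y) ∈ S_{00}^{01} if and only if x − y − xy and (−x²y + x² + y² − xy)(x−y) are squares and (1−y)(x−y) is a nonsquare. -/

import Mathlib

/-! For `(u, v)` in `E_{00}^{01}(a, b)` the element `-v` is a nonzero square, and `E(a, b)` together
with the square classes defining `E_{ij}^{rs}(a, b)` is stable under scaling by nonzero squares, so
one may take `v = -1`. The Associativity Equation then pins down `u = b(1-a)/(a²-b)`. At
`(a, b) = Ψ⁻¹(x, y) = (x(1-y)/(x-y), (1-y)/(x-y))` this is `u = y/(x-y-xy)`, and the three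
remaining conditions, that `u` and `au + 1` are squares and `u + 1 - a` is not, become the three
conditions of the statement after discarding nonzero square factors. -/

open scoped Classical

noncomputable section

/-- The operation of the quasigroup `Q_{a,b}`:
`u*v = u + a(v-u)` if `v-u` is a square, `u*v = u + b(v-u)` otherwise. -/
def qop {F : Type*} [Field F] (a b u v : F) : F :=
  if IsSquare (v - u) then u + a * (v - u) else u + b * (v - u)

/-- The set `Σ(F)` of pairs `(a,b)` with `a ≠ b`, `a,b ∉ {0,1}`, and
`ab` and `(1-a)(1-b)` both squares. -/
def SigSet (F : Type*) [Field F] : Set (F × F) :=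
  {p | p.1 ≠ p.2 ∧ p.1 ≠ 0 ∧ p.1 ≠ 1 ∧ p.2 ≠ 0 ∧ p.2 ≠ 1 ∧
    IsSquare (p.1 * p.2) ∧ IsSquare ((1 - p.1) * (1 - p.2))}

/-- `Q_{a,b}` is maximally nonassociative. -/
def MaxNA {F : Type*} [Field F] (a b : F) : Prop :=
  ∀ u v w : F, qop a b (qop a b u v) w = qop a b u (qop a b v w) → u = v ∧ v = w

/-- `σ(q)`: the number of pairs `(a,b) ∈ Σ` for which `Q_{a,b}` is
maximally nonassociative. -/
def sigmaCount (F : Type*) [Field F] : ℕ :=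
  Set.ncard {p : F × F | p ∈ SigSet F ∧ MaxNA p.1 p.2}

/-- The quadratic orthomorphism `ψ_{a,b}`. -/
def psiOrtho {F : Type*} [Field F] (a b u : F) : F :=
  if IsSquare u then a * u else b * u

/-- The Associativity Equation `ψ(ψ(u)-v) = ψ(-v) + ψ(u-v-ψ(-v))`. -/
def AssocEq {F : Type*} [Field F] (a b u v : F) : Prop :=
  psiOrtho a b (psiOrtho a b u - v) =
    psiOrtho a b (-v) + psiOrtho a b (u - v - psiOrtho a b (-v))

/-- The set `S(F)` of pairs `(x,y)` of squares with `x ≠ y`, `x,y ∉ {0,1}`. -/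
def SPairs (F : Type*) [Field F] : Set (F × F) :=
  {p | IsSquare p.1 ∧ IsSquare p.2 ∧ p.1 ≠ p.2 ∧ p.1 ≠ 0 ∧ p.1 ≠ 1 ∧ p.2 ≠ 0 ∧ p.2 ≠ 1}

/-- The map `Ψ : Σ → S`, `(a,b) ↦ (a/b, (1-a)/(1-b))`. -/
def PsiMap {F : Type*} [Field F] (p : F × F) : F × F :=
  (p.1 / p.2, (1 - p.1) / (1 - p.2))

/-- The set `E(a,b)` of nonzero solutions of the Associativity Equation. -/
def ESet {F : Type*} [Field F] (a b : F) : Set (F × F) :=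
  {p | p ≠ (0, 0) ∧ AssocEq a b p.1 p.2}

/-- The set `E_{ij}^{rs}(a,b)`. -/
def ESub {F : Type*} [Field F] (a b : F) (i j r s : Fin 2) : Set (F × F) :=
  {p | p ∈ ESet a b ∧ (IsSquare p.1 ↔ i = 0) ∧ (IsSquare (-p.2) ↔ j = 0) ∧
    (IsSquare (psiOrtho a b p.1 - p.2) ↔ r = 0) ∧
    (IsSquare (p.1 - p.2 - psiOrtho a b (-p.2)) ↔ s = 0)}

/-- The set `Σ_{ij}^{rs} = {(a,b) ∈ Σ : E_{ij}^{rs}(a,b) ≠ ∅}`. -/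
def SigSub (F : Type*) [Field F] (i j r s : Fin 2) : Set (F × F) :=
  {p | p ∈ SigSet F ∧ (ESub p.1 p.2 i j r s).Nonempty}

/-- The set `S_{ij}^{rs} = Ψ(Σ_{ij}^{rs})`. -/
def SSub (F : Type*) [Field F] (i j r s : Fin 2) : Set (F × F) :=
  PsiMap '' (SigSub F i j r s)

section

variable {F : Type*} [Field F]

theorem isSquare_mul_iff_of_isSquare {s t : F} (hs : IsSquare s) (hs0 : s ≠ 0) :
    IsSquare (t * s) ↔ IsSquare t :=
  ⟨fun h => by simpa [hs0] using h.div hs, fun h => h.mul hs⟩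

theorem isSquare_sq_mul_iff {w : F} (hw : w ≠ 0) (t : F) : IsSquare (w ^ 2 * t) ↔ IsSquare t := by
  rw [mul_comm]
  exact isSquare_mul_iff_of_isSquare (.sq w) (pow_ne_zero 2 hw)

theorem isSquare_div_iff_isSquare_mul {t d : F} (hd : d ≠ 0) :
    IsSquare (t / d) ↔ IsSquare (t * d) := by
  rw [show t / d = d⁻¹ ^ 2 * (t * d) by field_simp, isSquare_sq_mul_iff (inv_ne_zero hd)]

theorem psiOrtho_sq_mul (a b : F) {w : F} (hw : w ≠ 0) (u : F) :
    psiOrtho a b (w ^ 2 * u) = w ^ 2 * psiOrtho a b u := by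
  unfold psiOrtho
  rw [isSquare_sq_mul_iff hw]
  split_ifs <;> ring

theorem sq_mul_mem_eSub_iff {a b w : F} (hw : w ≠ 0) {i j r s : Fin 2} {u v : F} :
    (w ^ 2 * u, w ^ 2 * v) ∈ ESub a b i j r s ↔ (u, v) ∈ ESub a b i j r s := by
  have hw2 : w ^ 2 ≠ 0 := pow_ne_zero 2 hw
  have hpsi := psiOrtho_sq_mul a b hw
  have hψv : psiOrtho a b (-(w ^ 2 * v)) = w ^ 2 * psiOrtho a b (-v) := by
    rw [← hpsi, neg_mul_eq_mul_neg]
  have hr : psiOrtho a b (w ^ 2 * u) - w ^ 2 * v = w ^ 2 * (psiOrtho a b u - v) := by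
    rw [hpsi]; ring
  have hs : w ^ 2 * u - w ^ 2 * v - psiOrtho a b (-(w ^ 2 * v)) =
      w ^ 2 * (u - v - psiOrtho a b (-v)) := by
    rw [hψv]; ring
  have hassoc : AssocEq a b (w ^ 2 * u) (w ^ 2 * v) ↔ AssocEq a b u v := by
    unfold AssocEq
    rw [hr, hs, hψv, hpsi, hpsi, ← mul_add, mul_right_inj' hw2]
  have hne : (w ^ 2 * u, w ^ 2 * v) ≠ (0, 0) ↔ (u, v) ≠ (0, 0) := by
    simp [hw2]
  simp only [ESub, ESet, Set.mem_ofPred_eq, hassoc, hne]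
  rw [hr, hs, ← mul_neg]
  simp only [isSquare_sq_mul_iff hw]

theorem mk_neg_one_mem_eSub_0001_iff {a b c : F} :
    (c, -1) ∈ ESub a b 0 0 0 1 ↔
      IsSquare c ∧ IsSquare (a * c + 1) ∧ ¬ IsSquare (c + 1 - a) ∧ (a ^ 2 - b) * c = b * (1 - a) := by
  have hψ1 : psiOrtho a b 1 = a := by simp [psiOrtho]
  simp only [ESub, ESet, AssocEq, Set.mem_ofPred_eq, neg_neg, hψ1, sub_neg_eq_add, iff_true,
    iff_false, ne_eq, Prod.mk.injEq, neg_eq_zero, one_ne_zero, and_false,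
    not_false_eq_true, true_and, IsSquare.one]
  constructor
  · rintro ⟨hassoc, hc, hac, hc1⟩
    have hψc : psiOrtho a b c = a * c := if_pos hc
    rw [hψc] at hassoc hac
    rw [psiOrtho, if_pos hac, psiOrtho, if_neg hc1] at hassoc
    exact ⟨hc, hac, hc1, by linear_combination hassoc⟩
  · rintro ⟨hc, hac, hc1, heq⟩
    have hψc : psiOrtho a b c = a * c := if_pos hc
    refine ⟨?_, hc, hψc ▸ hac, hc1⟩
    rw [hψc, psiOrtho, if_pos hac, psiOrtho, if_neg hc1]
    linear_combination heq

theorem eSub_0001_nonempty_iff {a b : F} :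
    (ESub a b 0 0 0 1).Nonempty ↔ ∃ c, (c, -1) ∈ ESub a b 0 0 0 1 := by
  refine ⟨?_, fun ⟨c, hc⟩ => ⟨_, hc⟩⟩
  rintro ⟨⟨u, v⟩, huv⟩
  obtain ⟨-, hu, hv, -, hs⟩ := id huv
  obtain ⟨w, hw⟩ := hv.2 rfl
  have hw0 : w ≠ 0 := by
    rintro rfl
    have hv0 : v = 0 := by linear_combination -hw
    simp only [hv0, sub_zero, psiOrtho, neg_zero, IsSquare.zero, ↓reduceIte, mul_zero,
      one_ne_zero, iff_false] at hs
    exact hs (hu.2 rfl)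
  refine ⟨u / w ^ 2, (sq_mul_mem_eSub_iff hw0).1 ?_⟩
  rwa [mul_div_cancel₀ _ (pow_ne_zero 2 hw0), show w ^ 2 * -1 = v by linear_combination hw]

def psiMapInv (x y : F) : F × F :=
  (x * ((1 - y) / (x - y)), (1 - y) / (x - y))

theorem psiMap_eq_iff {x y : F} (hx0 : x ≠ 0) (hy0 : y ≠ 0) (hxy : x ≠ y) (hx1 : x ≠ 1)
    (hy1 : y ≠ 1) {p : F × F} : PsiMap p = (x, y) ↔ p = psiMapInv x y := by
  obtain ⟨a, b⟩ := p
  have hd : x - y ≠ 0 := sub_ne_zero.2 hxy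
  simp only [PsiMap, psiMapInv, Prod.mk.injEq]
  constructor
  · rintro ⟨ha, hb⟩
    have hb0 : b ≠ 0 := by rintro rfl; exact hx0 (by rw [← ha, div_zero])
    have hb1 : 1 - b ≠ 0 := fun h => hy0 (by rw [← hb, h, div_zero])
    rw [div_eq_iff hb0] at ha
    rw [div_eq_iff hb1] at hb
    have hbxy : b = (1 - y) / (x - y) := by
      rw [eq_div_iff hd]; linear_combination -hb - ha
    exact ⟨hbxy ▸ ha, hbxy⟩
  · rintro ⟨rfl, rfl⟩
    have h1y : 1 - y ≠ 0 := sub_ne_zero.2 hy1.symm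
    have hx1' : x - 1 ≠ 0 := sub_ne_zero.2 hx1
    have hB1 : 1 - (1 - y) / (x - y) = (x - 1) / (x - y) := by field_simp; ring
    rw [hB1, mul_div_cancel_right₀ x (div_ne_zero h1y hd), div_eq_iff (div_ne_zero hx1' hd)]
    exact ⟨rfl, by field_simp; ring⟩

theorem psiMapInv_mem_sigSet {x y : F} (h : (x, y) ∈ SPairs F) : psiMapInv x y ∈ SigSet F := by
  obtain ⟨hx, hy, hxy, hx0, hx1, hy0, hy1⟩ := h
  have hd : x - y ≠ 0 := sub_ne_zero.2 hxy
  have hB0 : (1 - y) / (x - y) ≠ 0 := div_ne_zero (sub_ne_zero.2 hy1.symm) hd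
  have hx1' : x - 1 ≠ 0 := sub_ne_zero.2 hx1
  refine ⟨?_, mul_ne_zero hx0 hB0, ?_, hB0, ?_, ?_, ?_⟩ <;> dsimp only [psiMapInv]
  · exact fun h => hx1 (mul_right_cancel₀ hB0 (h.trans (one_mul _).symm))
  · rw [← mul_div_assoc, ne_eq, div_eq_one_iff_eq hd]
    intro h
    exact mul_ne_zero hy0 hx1' (by linear_combination -h)
  · rw [ne_eq, div_eq_one_iff_eq hd]
    exact fun h => hx1 (by linear_combination -h)
  · rw [mul_assoc, ← sq, mul_comm]
    exact (isSquare_sq_mul_iff hB0 x).2 hx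
  · rw [show (1 - x * ((1 - y) / (x - y))) * (1 - (1 - y) / (x - y)) = ((x - 1) / (x - y)) ^ 2 * y by
      field_simp; ring]
    exact (isSquare_sq_mul_iff (div_ne_zero hx1' hd) y).2 hy

theorem mem_sSub_iff {x y : F} (h : (x, y) ∈ SPairs F) {i j r s : Fin 2} :
    (x, y) ∈ SSub F i j r s ↔ (ESub (psiMapInv x y).1 (psiMapInv x y).2 i j r s).Nonempty := by
  obtain ⟨-, -, hxy, hx0, hx1, hy0, hy1⟩ := id h
  simp only [SSub, SigSub, Set.mem_image, psiMap_eq_iff hx0 hy0 hxy hx1 hy1, exists_eq_right,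
    Set.mem_ofPred_eq, and_iff_right (psiMapInv_mem_sigSet h)]

theorem psiMapInv_sq_sub_mul_eq_iff {x y : F} (hxy : x ≠ y) (hx1 : x ≠ 1) (hy1 : y ≠ 1) (c : F) :
    ((psiMapInv x y).1 ^ 2 - (psiMapInv x y).2) * c =
        (psiMapInv x y).2 * (1 - (psiMapInv x y).1) ↔ (x - y - x * y) * c = y := by
  have hd : x - y ≠ 0 := sub_ne_zero.2 hxy
  have hk : (1 - y) * (x - 1) / (x - y) ^ 2 ≠ 0 :=
    div_ne_zero (mul_ne_zero (sub_ne_zero.2 hy1.symm) (sub_ne_zero.2 hx1)) (pow_ne_zero 2 hd)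
  have hfactor : ((psiMapInv x y).1 ^ 2 - (psiMapInv x y).2) * c -
      (psiMapInv x y).2 * (1 - (psiMapInv x y).1) =
        (1 - y) * (x - 1) / (x - y) ^ 2 * ((x - y - x * y) * c - y) := by
    simp only [psiMapInv]; field_simp; ring
  rw [← sub_eq_zero, hfactor, mul_eq_zero, or_iff_right hk, sub_eq_zero]

theorem isSquare_psiMapInv_fst_mul_div_add_one_iff {x y : F} (hxy : x ≠ y)
    (ht : IsSquare (x - y - x * y)) (ht0 : x - y - x * y ≠ 0) :
    IsSquare ((psiMapInv x y).1 * (y / (x - y - x * y)) + 1) ↔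
      IsSquare ((-(x ^ 2 * y) + x ^ 2 + y ^ 2 - x * y) * (x - y)) := by
  have hd : x - y ≠ 0 := sub_ne_zero.2 hxy
  have hid : (psiMapInv x y).1 * (y / (x - y - x * y)) + 1 =
      (-(x ^ 2 * y) + x ^ 2 + y ^ 2 - x * y) / ((x - y) * (x - y - x * y)) := by
    simp only [psiMapInv]; field_simp; ring
  rw [hid, isSquare_div_iff_isSquare_mul (mul_ne_zero hd ht0), ← mul_assoc,
    isSquare_mul_iff_of_isSquare ht ht0]

theorem isSquare_div_add_one_sub_psiMapInv_fst_iff {x y : F} (hx0 : x ≠ 0) (hy : IsSquare y)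
    (hy0 : y ≠ 0) (hxy : x ≠ y) (ht : IsSquare (x - y - x * y)) (ht0 : x - y - x * y ≠ 0) :
    IsSquare (y / (x - y - x * y) + 1 - (psiMapInv x y).1) ↔ IsSquare ((1 - y) * (x - y)) := by
  have hd : x - y ≠ 0 := sub_ne_zero.2 hxy
  have hid : y / (x - y - x * y) + 1 - (psiMapInv x y).1 =
      (1 - y) * (x - y) * (x ^ 2 * (y * (x - y - x * y))) / ((x - y) * (x - y - x * y)) ^ 2 := by
    simp only [psiMapInv]
    generalize ht_def : x - y - x * y = t at ht0
    field_simp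
    rw [← ht_def]
    ring
  rw [hid, isSquare_div_iff_isSquare_mul (pow_ne_zero 2 (mul_ne_zero hd ht0)), mul_comm _ (_ ^ 2),
    isSquare_sq_mul_iff (mul_ne_zero hd ht0)]
  exact isSquare_mul_iff_of_isSquare ((IsSquare.sq x).mul (hy.mul ht))
    (mul_ne_zero (pow_ne_zero 2 hx0) (mul_ne_zero hy0 ht0))

theorem sub_sub_mul_ne_zero_of_not_isSquare {x y : F} (hx : IsSquare x) (hy : IsSquare y) (hx0 : x ≠ 0)
    (hy0 : y ≠ 0) (hM : IsSquare ((-(x ^ 2 * y) + x ^ 2 + y ^ 2 - x * y) * (x - y)))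
    (hN : ¬ IsSquare ((1 - y) * (x - y))) : x - y - x * y ≠ 0 := by
  intro ht
  have hd : x - y = x * y := by linear_combination ht
  rw [show (-(x ^ 2 * y) + x ^ 2 + y ^ 2 - x * y) * (x - y) = (x * y) ^ 2 * (1 - y) by
    linear_combination (x ^ 2 - x * y + y ^ 2 - x * y ^ 2) * ht,
    isSquare_sq_mul_iff (mul_ne_zero hx0 hy0)] at hM
  exact hN (hd ▸ hM.mul (hx.mul hy))

end

theorem ssub_0001_characterisation_general (F : Type*) [Field F] (x y : F) (hxy : (x, y) ∈ SPairs F) :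
    (x, y) ∈ SSub F 0 0 0 1 ↔
      IsSquare (x - y - x * y) ∧
      IsSquare ((-(x ^ 2 * y) + x ^ 2 + y ^ 2 - x * y) * (x - y)) ∧
      ¬ IsSquare ((1 - y) * (x - y)) := by
  rw [mem_sSub_iff hxy, eSub_0001_nonempty_iff]
  obtain ⟨hx, hy, hne, hx0, hx1, hy0, hy1⟩ := hxy
  simp only [mk_neg_one_mem_eSub_0001_iff, psiMapInv_sq_sub_mul_eq_iff hne hx1 hy1]
  constructor
  · rintro ⟨c, hc, hAc, hc1, htc⟩
    have ht0 : x - y - x * y ≠ 0 := left_ne_zero_of_mul (htc ▸ hy0)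
    obtain rfl : c = y / (x - y - x * y) := by rw [eq_div_iff ht0, mul_comm, htc]
    have ht : IsSquare (x - y - x * y) := by simpa [hy0, ht0] using hy.div hc
    exact ⟨ht, (isSquare_psiMapInv_fst_mul_div_add_one_iff hne ht ht0).1 hAc,
      (isSquare_div_add_one_sub_psiMapInv_fst_iff hx0 hy hy0 hne ht ht0).not.1 hc1⟩
  · rintro ⟨ht, hM, hN⟩
    have ht0 := sub_sub_mul_ne_zero_of_not_isSquare hx hy hx0 hy0 hM hN
    exact ⟨y / (x - y - x * y), hy.div ht,
      (isSquare_psiMapInv_fst_mul_div_add_one_iff hne ht ht0).2 hM,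
      (isSquare_div_add_one_sub_psiMapInv_fst_iff hx0 hy hy0 hne ht ht0).not.2 hN,
      mul_div_cancel₀ y ht0⟩

/-- Lemma 2.6: for `(x,y) ∈ S`, `(x,y) ∈ S_{00}^{01}` iff `x - y - xy` and
`(-x²y + x² + y² - xy)(x-y)` are squares and `(1-y)(x-y)` is a nonsquare. -/
theorem ssub_0001_characterisation (F : Type*) [Field F] [Fintype F]
    (hodd : Odd (Fintype.card F)) (x y : F) (hxy : (x, y) ∈ SPairs F) :
    (x, y) ∈ SSub F 0 0 0 1 ↔
      IsSquare (x - y - x * y) ∧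
      IsSquare ((-(x ^ 2 * y) + x ^ 2 + y ^ 2 - x * y) * (x - y)) ∧
      ¬ IsSquare ((1 - y) * (x - y)) :=
  ssub_0001_characterisation_general F x y hxy
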